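/- arXiv:2509.05998 — 5 statements merged into one kernel-verified Lean document; each statement's English description precedes it below -/
import Mathlib

section
/- The map b : V → V* defined by b(v) = Ω(v,·) + Σ_{i=1}^q λ_i(v)·λ_i is a linear isomorphism. -/
/-- Linear `q`-cosymplectic data: `V` is a real vector space of
dimension `2n + q`, `Ω` is an alternating bilinear form, `λ₁, …, λ_q` are linearly
independent functionals, `R₁, …, R_q` are Reeb vectors with `Ω(R_i, ·) = 0` and
`λ_i(R_j) = δ_ij`, `V = span{R_i} ⊕ ξ` where `ξ = ⋂ ker λ_i`, and `Ω` restricted to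
`ξ × ξ` is nondegenerate.  Then the map `b : V → V*`,
`b(v) = Ω(v, ·) + Σ_i λ_i(v) · λ_i`, is a linear isomorphism. -/
theorem stmt_0
    {n q : ℕ} (hn : 0 < n) (hq : 0 < q)
    (V : Type*) [AddCommGroup V] [Module ℝ V] [FiniteDimensional ℝ V]
    (hdim : Module.finrank ℝ V = 2 * n + q)
    (Ω : V →ₗ[ℝ] V →ₗ[ℝ] ℝ) (hΩalt : ∀ v : V, Ω v v = 0)
    (lam : Fin q → (V →ₗ[ℝ] ℝ)) (hlam : LinearIndependent ℝ lam)
    (R : Fin q → V)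
    (hΩR : ∀ i, Ω (R i) = 0)
    (hlamR : ∀ i j, lam i (R j) = if i = j then (1 : ℝ) else 0)
    (hsplit : IsCompl (Submodule.span ℝ (Set.range R))
      (⨅ i, LinearMap.ker (lam i)))
    (hnondeg : ∀ v ∈ (⨅ i, LinearMap.ker (lam i)),
      (∀ w ∈ (⨅ i, LinearMap.ker (lam i)), Ω v w = 0) → v = 0) :
    Function.Bijective ⇑(Ω + ∑ i, (lam i).smulRight (lam i)) := by
  set b := Ω + ∑ i, (lam i).smulRight (lam i) with hb
  have hinj : Function.Injective ⇑b := by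
    rw [← LinearMap.ker_eq_bot, Submodule.eq_bot_iff]
    intro v hv
    have hbv : ∀ w, Ω v w + ∑ i, lam i v * lam i w = 0 := by
      intro w
      have := congrArg (fun f => f w) (LinearMap.mem_ker.mp hv)
      simpa [b, LinearMap.sum_apply, LinearMap.smulRight_apply, smul_eq_mul] using this
    have hskew : ∀ x y : V, Ω x y = - Ω y x := by
      intro x y
      have h := hΩalt (x + y)
      simp [map_add, LinearMap.add_apply, hΩalt] at h
      linarith
    have hlamv : ∀ j, lam j v = 0 := by
      intro j
      have h := hbv (R j)
      have hΩvR : Ω v (R j) = 0 := by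
        rw [hskew v (R j), hΩR j]; simp
      rw [hΩvR] at h
      simpa [hlamR, Finset.sum_ite_eq'] using h
    have hvξ : v ∈ ⨅ i, LinearMap.ker (lam i) := by
      simp [Submodule.mem_iInf, LinearMap.mem_ker, hlamv]
    refine hnondeg v hvξ ?_
    intro w hw
    have hw' : ∀ i, lam i w = 0 := fun i =>
      LinearMap.mem_ker.mp ((Submodule.mem_iInf _).mp hw i)
    have := hbv w
    simpa [hw'] using this
  have hsur : Function.Surjective ⇑b := by
    have hfr : Module.finrank ℝ V = Module.finrank ℝ (Module.Dual ℝ V) :=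
      Subspace.dual_finrank_eq.symm
    exact (LinearMap.injective_iff_surjective_of_finrank_eq_finrank hfr).mp hinj
  exact ⟨hinj, hsur⟩
end

section
/- Let a ∈ V* be a linear functional with a(R_i) = 0 for all i ∈ {1,…,q}, and define the alternating bilinear form Ω' := Ω + a ∧ (Σ_{i=1}^q λ_i), where (a ∧ μ)(u,v) := a(u)μ(v) − a(v)μ(u). Set R_i' := R_i + b⁻¹(a). Then: (i) b⁻¹(a) ∈ ξ, so that V = span{R_1',…,R_q'} ⊕ ξ; (ii) λ_i(R_j') = δ_{ij} for all i,j; (iii) Ω'(R_i', ·) = 0 for all i; and (iv) the restriction of Ω' to ξ × ξ equals the restriction of Ω and is nondegenerate. Hence (V, Ω', λ_1, …, λ_q) is again linear q-cosymplectic data, with Reeb vectors R_1', …, R_q'. (This is the pointwise content of the theorem that (M, Ω + dH' ∧ Σλ_i, λ) is again a q-cosymplectic manifold when H' is a first integral of all Reeb vector fields.) -/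
/-- With linear `q`-cosymplectic data and `b` a linear isomorphism
with inverse `b⁻¹`, let `a ∈ V*` satisfy `a(R_i) = 0` for all `i`, and let
`Ω' := Ω + a ∧ (Σ_i λ_i)`, i.e. `Ω'(u,v) = Ω(u,v) + a(u)(Σ_i λ_i)(v) − a(v)(Σ_i λ_i)(u)`.
Set `R_i' := R_i + b⁻¹(a)`.  Then: (i) `b⁻¹(a) ∈ ξ` and `V = span{R_i'} ⊕ ξ`;
(ii) `λ_i(R_j') = δ_ij`; (iii) `Ω'(R_i', ·) = 0`; (iv) `Ω'` agrees with `Ω` on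
`ξ × ξ` and is nondegenerate there.  Hence `(V, Ω', λ)` is again linear
`q`-cosymplectic data with Reeb vectors `R_i'`. -/
theorem stmt_5
    {n q : ℕ} (hn : 0 < n) (hq : 0 < q)
    (V : Type*) [AddCommGroup V] [Module ℝ V] [FiniteDimensional ℝ V]
    (hdim : Module.finrank ℝ V = 2 * n + q)
    (Ω : V →ₗ[ℝ] V →ₗ[ℝ] ℝ) (hΩalt : ∀ v : V, Ω v v = 0)
    (lam : Fin q → (V →ₗ[ℝ] ℝ)) (hlam : LinearIndependent ℝ lam)
    (R : Fin q → V)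
    (hΩR : ∀ i, Ω (R i) = 0)
    (hlamR : ∀ i j, lam i (R j) = if i = j then (1 : ℝ) else 0)
    (hsplit : IsCompl (Submodule.span ℝ (Set.range R))
      (⨅ i, LinearMap.ker (lam i)))
    (hnondeg : ∀ v ∈ (⨅ i, LinearMap.ker (lam i)),
      (∀ w ∈ (⨅ i, LinearMap.ker (lam i)), Ω v w = 0) → v = 0)
    (b : V →ₗ[ℝ] (V →ₗ[ℝ] ℝ))
    (hb : ∀ v : V, b v = Ω v + ∑ i, lam i v • lam i)
    (binv : (V →ₗ[ℝ] ℝ) → V)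
    (hbinv₁ : ∀ α : V →ₗ[ℝ] ℝ, b (binv α) = α)
    (hbinv₂ : ∀ v : V, binv (b v) = v)
    (a : V →ₗ[ℝ] ℝ) (ha : ∀ i, a (R i) = 0)
    (Ω' : V →ₗ[ℝ] V →ₗ[ℝ] ℝ)
    (hΩ' : ∀ u v : V,
      Ω' u v = Ω u v + a u * (∑ i, lam i v) - a v * (∑ i, lam i u)) :
    binv a ∈ (⨅ i, LinearMap.ker (lam i)) ∧
    IsCompl (Submodule.span ℝ (Set.range fun i => R i + binv a))
      (⨅ i, LinearMap.ker (lam i)) ∧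
    (∀ i j, lam i (R j + binv a) = if i = j then (1 : ℝ) else 0) ∧
    (∀ i, Ω' (R i + binv a) = 0) ∧
    (∀ v ∈ (⨅ i, LinearMap.ker (lam i)), ∀ w ∈ (⨅ i, LinearMap.ker (lam i)),
      Ω' v w = Ω v w) ∧
    (∀ v ∈ (⨅ i, LinearMap.ker (lam i)),
      (∀ w ∈ (⨅ i, LinearMap.ker (lam i)), Ω' v w = 0) → v = 0) := by

  have hanti : ∀ x y : V, Ω x y = - Ω y x := by
    intro x y
    have h := hΩalt (x + y)
    simp only [map_add, LinearMap.add_apply] at h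
    rw [hΩalt x, hΩalt y] at h
    linarith
  have hba : Ω (binv a) + ∑ i, lam i (binv a) • lam i = a := by
    rw [← hb]; exact hbinv₁ a
  have hlamu : ∀ j, lam j (binv a) = 0 := by
    intro j
    have h := congrArg (fun f : V →ₗ[ℝ] ℝ => f (R j)) hba
    simp only [LinearMap.add_apply, LinearMap.smul_apply, smul_eq_mul,
      LinearMap.coe_sum, Finset.sum_apply] at h
    have h1 : Ω (binv a) (R j) = 0 := by
      rw [hanti]; rw [hΩR j]; simp
    rw [h1, ha j] at h
    have h2 : (∑ i, lam i (binv a) * lam i (R j)) = lam j (binv a) := by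
      rw [Finset.sum_eq_single j]
      · rw [hlamR j j]; simp
      · intro i _ hij; rw [hlamR i j]; simp [hij]
      · simp
    rw [h2] at h
    linarith
  have huξ : binv a ∈ (⨅ i, LinearMap.ker (lam i)) := by
    simp only [Submodule.mem_iInf, LinearMap.mem_ker]
    exact hlamu
  have hΩu : ∀ v, Ω (binv a) v = a v := by
    intro v
    have h := congrArg (fun f : V →ₗ[ℝ] ℝ => f v) hba
    simp only [LinearMap.add_apply, LinearMap.smul_apply, smul_eq_mul,
      LinearMap.coe_sum, Finset.sum_apply] at h
    have : (∑ i, lam i (binv a) * lam i v) = 0 := by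
      apply Finset.sum_eq_zero; intro i _; rw [hlamu i]; ring
    rw [this] at h; linarith
  have hau : a (binv a) = 0 := by rw [← hΩu]; exact hΩalt _
  have hlamR' : ∀ i j, lam i (R j + binv a) = if i = j then (1 : ℝ) else 0 := by
    intro i j
    rw [map_add, hlamu i, hlamR i j, add_zero]
  refine ⟨huξ, ?_, hlamR', ?_, ?_, ?_⟩
  · constructor
    · rw [Submodule.disjoint_def]
      intro x hx hxξ
      simp only [Submodule.mem_iInf, LinearMap.mem_ker] at hxξ
      rw [Submodule.mem_span_range_iff_exists_fun] at hx
      obtain ⟨c, hc⟩ := hx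
      have hc0 : ∀ j, c j = 0 := by
        intro j
        have := congrArg (lam j) hc
        rw [map_sum] at this
        simp only [map_smul, smul_eq_mul, hlamR'] at this
        rw [hxξ j] at this
        rw [Finset.sum_eq_single j] at this
        · simpa using this
        · intro i _ hij; simp [hlamR' j i, Ne.symm hij]
        · simp
      rw [← hc]
      apply Finset.sum_eq_zero
      intro i _; rw [hc0 i, zero_smul]
    · rw [codisjoint_iff]
      rw [eq_top_iff]
      have htop : Submodule.span ℝ (Set.range R) ⊔ (⨅ i, LinearMap.ker (lam i)) = ⊤ :=
        codisjoint_iff.mp hsplit.codisjoint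
      rw [← htop]
      apply sup_le
      · rw [Submodule.span_le]
        rintro _ ⟨i, rfl⟩
        have h1 : R i + binv a ∈ Submodule.span ℝ (Set.range fun i => R i + binv a) ⊔
            (⨅ i, LinearMap.ker (lam i)) :=
          le_sup_left (α := Submodule ℝ V) (Submodule.subset_span ⟨i, rfl⟩)
        have h2 : binv a ∈ Submodule.span ℝ (Set.range fun i => R i + binv a) ⊔
            (⨅ i, LinearMap.ker (lam i)) := le_sup_right (α := Submodule ℝ V) huξ
        have := Submodule.sub_mem _ h1 h2
        simpa using this
      · exact le_sup_right
  · intro i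
    ext v
    rw [LinearMap.zero_apply, hΩ']
    have h1 : Ω (R i + binv a) v = a v := by
      rw [map_add, LinearMap.add_apply, hΩR i, hΩu]
      simp
    have h2 : a (R i + binv a) = 0 := by rw [map_add, ha i, hau, add_zero]
    have h3 : (∑ j, lam j (R i + binv a)) = 1 := by
      rw [Finset.sum_eq_single i]
      · rw [hlamR' i i]; simp
      · intro j _ hji; rw [hlamR' j i]; simp [hji]
      · simp
    rw [h1, h2, h3]
    ring
  · intro v hv w hw
    simp only [Submodule.mem_iInf, LinearMap.mem_ker] at hv hw
    rw [hΩ']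
    simp [hv, hw]
  · intro v hv hv0
    apply hnondeg v hv
    intro w hw
    have heq : Ω' v w = Ω v w := by
      simp only [Submodule.mem_iInf, LinearMap.mem_ker] at hv hw
      rw [hΩ']; simp [hv, hw]
    rw [← heq]; exact hv0 w hw
end

section
/- Let a ∈ V* satisfy a(R_i) = 0 for all i, let Ω' := Ω + a ∧ (Σ_{i=1}^q λ_i) with R_i' := R_i + b⁻¹(a) as above. Then for every φ ∈ V*, the vector w_φ := b⁻¹(φ − Σ_{i=1}^q φ(R_i)·λ_i) satisfies λ_j(w_φ) = 0 for all j and Ω'(w_φ, ·) = φ − Σ_{i=1}^q φ(R_i')·λ_i. In other words, the Ω-Hamiltonian vector of φ coincides with the Ω'-Hamiltonian vector of φ. (Pointwise form of the theorem that X_f = X_f' and hence {f₁,f₂} = {f₁,f₂}' for the deformed q-cosymplectic structure.) -/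
/-!
Let `u := b⁻¹(a)` and `w := w_φ`. Both `a` and `φ − Σ φ(R_i) λ_i` vanish on the Reeb vectors, and
evaluating `b(x) = Ω(x, ·) + Σ λ_i(x) λ_i` at `R_j` (where `Ω(·, R_j) = 0`) shows that `b⁻¹` of such
a covector is killed by every `λ_j`. Hence `Ω(u, ·) = a` and `Ω(w, ·) = φ − Σ φ(R_i) λ_i`. Since
`Σ λ_i(w) = 0`, the deformation contributes `a(w) Σ λ_i = −Ω(w, u) Σ λ_i = −φ(u) Σ λ_i` to
`Ω'(w, ·)`, which is exactly the shift from `φ(R_i)` to `φ(R_i + u)`.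
-/

namespace Cosymplectic

variable {𝕜 V ι : Type*} [CommRing 𝕜] [AddCommGroup V] [Module 𝕜 V] [Fintype ι]
  {Ω : V →ₗ[𝕜] V →ₗ[𝕜] 𝕜} {lam : ι → V →ₗ[𝕜] 𝕜} {R : ι → V}

def horizontalPart (lam : ι → V →ₗ[𝕜] 𝕜) (R : ι → V) (φ : V →ₗ[𝕜] 𝕜) : V →ₗ[𝕜] 𝕜 :=
  φ - ∑ i, φ (R i) • lam i

theorem sum_smul_apply_reeb [DecidableEq ι]
    (hlamR : ∀ i j, lam i (R j) = if i = j then 1 else 0)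
    (c : ι → 𝕜) (j : ι) : (∑ i, c i • lam i) (R j) = c j := by
  simp [hlamR]

theorem horizontalPart_apply_reeb [DecidableEq ι]
    (hlamR : ∀ i j, lam i (R j) = if i = j then 1 else 0)
    (φ : V →ₗ[𝕜] 𝕜) (j : ι) : horizontalPart lam R φ (R j) = 0 := by
  rw [horizontalPart, LinearMap.sub_apply, sum_smul_apply_reeb hlamR, sub_self]

theorem horizontalPart_apply_of_horizontal (φ : V →ₗ[𝕜] 𝕜) {v : V} (hv : ∀ i, lam i v = 0) :
    horizontalPart lam R φ v = φ v := by
  simp [horizontalPart, hv]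

theorem horizontal_and_eq_of_flat_eq [DecidableEq ι] (hΩ : Ω.IsAlt) (hΩR : ∀ j, Ω (R j) = 0)
    (hlamR : ∀ i j, lam i (R j) = if i = j then 1 else 0) {w : V} {α : V →ₗ[𝕜] 𝕜}
    (hw : Ω w + ∑ i, lam i w • lam i = α) (hα : ∀ j, α (R j) = 0) :
    (∀ j, lam j w = 0) ∧ Ω w = α := by
  have horizontal : ∀ j, lam j w = 0 := by
    intro j
    have hΩwR : Ω w (R j) = 0 := hΩ.eq_iff.mp (by rw [hΩR j, LinearMap.zero_apply])
    simpa [hΩwR, sum_smul_apply_reeb hlamR, hα] using congrArg (· (R j)) hw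
  refine ⟨horizontal, ?_⟩
  simpa [horizontal] using hw

theorem deformed_apply_hamiltonian (hΩ : Ω.IsAlt) {a : V →ₗ[𝕜] 𝕜} {Ω' : V →ₗ[𝕜] V →ₗ[𝕜] 𝕜}
    (hΩ' : ∀ u v, Ω' u v = Ω u v + a u * (∑ i, lam i v) - a v * (∑ i, lam i u))
    {u w : V} (hu : Ω u = a) (hlamu : ∀ i, lam i u = 0) {φ : V →ₗ[𝕜] 𝕜}
    (hw : Ω w = horizontalPart lam R φ) (hlamw : ∀ i, lam i w = 0) :
    Ω' w = φ - ∑ i, φ (R i + u) • lam i := by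
  have haw : a w = -φ u := by
    rw [← hu, ← hΩ.neg, hw, horizontalPart_apply_of_horizontal φ hlamu]
  ext v
  have hw_v := congrArg (· v) hw
  simp only [horizontalPart, LinearMap.sub_apply, LinearMap.sum_apply, LinearMap.smul_apply,
    smul_eq_mul] at hw_v
  simp only [hΩ', hw_v, haw, hlamw, Finset.sum_const_zero, LinearMap.sub_apply,
    LinearMap.sum_apply, LinearMap.smul_apply, smul_eq_mul, map_add, add_mul,
    Finset.sum_add_distrib, ← Finset.mul_sum]
  ring

end Cosymplectic

open Cosymplectic in
theorem stmt_6_general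
    {q : ℕ}
    (V : Type*) [AddCommGroup V] [Module ℝ V]
    (Ω : V →ₗ[ℝ] V →ₗ[ℝ] ℝ) (hΩalt : ∀ v : V, Ω v v = 0)
    (lam : Fin q → (V →ₗ[ℝ] ℝ))
    (R : Fin q → V)
    (hΩR : ∀ i, Ω (R i) = 0)
    (hlamR : ∀ i j, lam i (R j) = if i = j then (1 : ℝ) else 0)
    (b : V →ₗ[ℝ] (V →ₗ[ℝ] ℝ))
    (hb : ∀ v : V, b v = Ω v + ∑ i, lam i v • lam i)
    (binv : (V →ₗ[ℝ] ℝ) → V)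
    (hbinv₁ : ∀ α : V →ₗ[ℝ] ℝ, b (binv α) = α)
    (a : V →ₗ[ℝ] ℝ) (ha : ∀ i, a (R i) = 0)
    (Ω' : V →ₗ[ℝ] V →ₗ[ℝ] ℝ)
    (hΩ' : ∀ u v : V,
      Ω' u v = Ω u v + a u * (∑ i, lam i v) - a v * (∑ i, lam i u)) :
    ∀ φ : V →ₗ[ℝ] ℝ,
      (∀ j : Fin q, lam j (binv (φ - ∑ i, φ (R i) • lam i)) = 0) ∧
      Ω' (binv (φ - ∑ i, φ (R i) • lam i))
        = φ - ∑ i, φ (R i + binv a) • lam i := by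
  intro φ
  have flat_binv : ∀ α, Ω (binv α) + ∑ i, lam i (binv α) • lam i = α := fun α =>
    (hb _).symm.trans (hbinv₁ α)
  obtain ⟨hlamu, hu⟩ := horizontal_and_eq_of_flat_eq hΩalt hΩR hlamR (flat_binv a) ha
  obtain ⟨hlamw, hw⟩ := horizontal_and_eq_of_flat_eq hΩalt hΩR hlamR
    (flat_binv (horizontalPart lam R φ)) (horizontalPart_apply_reeb hlamR φ)
  exact ⟨hlamw, deformed_apply_hamiltonian hΩalt hΩ' hu hlamu hw hlamw⟩

/-- With linear `q`-cosymplectic data, `b` a linear isomorphism with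
inverse `b⁻¹`, `a ∈ V*` with `a(R_i) = 0` for all `i`, and
`Ω' := Ω + a ∧ (Σ_i λ_i)`, set `R_i' := R_i + b⁻¹(a)`.  Then for every `φ ∈ V*` the
vector `w_φ := b⁻¹(φ − Σ_i φ(R_i)·λ_i)` satisfies `λ_j(w_φ) = 0` for all `j` and
`Ω'(w_φ, ·) = φ − Σ_i φ(R_i')·λ_i`: the `Ω`-Hamiltonian vector of `φ` coincides with
its `Ω'`-Hamiltonian vector. -/
theorem stmt_6
    {n q : ℕ} (hn : 0 < n) (hq : 0 < q)
    (V : Type*) [AddCommGroup V] [Module ℝ V] [FiniteDimensional ℝ V]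
    (hdim : Module.finrank ℝ V = 2 * n + q)
    (Ω : V →ₗ[ℝ] V →ₗ[ℝ] ℝ) (hΩalt : ∀ v : V, Ω v v = 0)
    (lam : Fin q → (V →ₗ[ℝ] ℝ)) (hlam : LinearIndependent ℝ lam)
    (R : Fin q → V)
    (hΩR : ∀ i, Ω (R i) = 0)
    (hlamR : ∀ i j, lam i (R j) = if i = j then (1 : ℝ) else 0)
    (hsplit : IsCompl (Submodule.span ℝ (Set.range R))
      (⨅ i, LinearMap.ker (lam i)))
    (hnondeg : ∀ v ∈ (⨅ i, LinearMap.ker (lam i)),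
      (∀ w ∈ (⨅ i, LinearMap.ker (lam i)), Ω v w = 0) → v = 0)
    (b : V →ₗ[ℝ] (V →ₗ[ℝ] ℝ))
    (hb : ∀ v : V, b v = Ω v + ∑ i, lam i v • lam i)
    (binv : (V →ₗ[ℝ] ℝ) → V)
    (hbinv₁ : ∀ α : V →ₗ[ℝ] ℝ, b (binv α) = α)
    (hbinv₂ : ∀ v : V, binv (b v) = v)
    (a : V →ₗ[ℝ] ℝ) (ha : ∀ i, a (R i) = 0)
    (Ω' : V →ₗ[ℝ] V →ₗ[ℝ] ℝ)
    (hΩ' : ∀ u v : V,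
      Ω' u v = Ω u v + a u * (∑ i, lam i v) - a v * (∑ i, lam i u)) :
    ∀ φ : V →ₗ[ℝ] ℝ,
      (∀ j : Fin q, lam j (binv (φ - ∑ i, φ (R i) • lam i)) = 0) ∧
      Ω' (binv (φ - ∑ i, φ (R i) • lam i))
        = φ - ∑ i, φ (R i + binv a) • lam i :=
  stmt_6_general V Ω hΩalt lam R hΩR hlamR b hb binv hbinv₁ a ha Ω' hΩ'
end

section
/- Let R be a commutative ring, n, q natural numbers with q ≥ 1, and let a, b_1, …, b_q ∈ R satisfy a^{n+1} = 0 and b_i² = 0 for every i ∈ {1,…,q}. Then (a + b_1 + ⋯ + b_q)^{n+q} = ((n+q)!/n!) · a^n · b_1 ⋯ b_q, i.e. the (n+q)-th power equals the multinomial coefficient C(n+q, n)·q! times a^n b_1⋯b_q. (This is the combinatorial core of the computation of ω̂^{n+q} = C(n+q,n)·q!·(pr*ω)^n ∧ ds_1 ∧ pr*η_1 ∧ ⋯ ∧ ds_q ∧ pr*η_q in the symplectization theorem.) -/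
lemma step_lemma {R : Type*} [CommRing R] (m : ℕ) (x c : R)
    (hx : x ^ (m + 1) = 0) (hc : c ^ 2 = 0) :
    (x + c) ^ (m + 1) = (m + 1) • (x ^ m * c) := by
  rw [add_pow]
  rw [Finset.sum_eq_single_of_mem m (by simp [Nat.lt_succ_iff])]
  · simp only [Nat.choose_succ_self_right, nsmul_eq_mul, Nat.add_sub_cancel_left,
      pow_one, Nat.cast_add, Nat.cast_one]
    ring
  · intro k hk hkm
    rcases lt_or_gt_of_ne hkm with h | h
    · have h2 : 2 ≤ m + 1 - k := by omega
      have : c ^ (m + 1 - k) = 0 := by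
        calc c ^ (m + 1 - k) = c ^ 2 * c ^ (m + 1 - k - 2) := by
              rw [← pow_add]; congr 1; omega
          _ = 0 := by rw [hc, zero_mul]
      simp [this]
    · have hk1 : k = m + 1 := by
        simp only [Finset.mem_range] at hk; omega
      simp [hk1, hx]

lemma key_lemma {R : Type*} [CommRing R] (n : ℕ) :
    ∀ (q : ℕ) (b : Fin q → R) (a : R), a ^ (n + 1) = 0 → (∀ i, b i ^ 2 = 0) →
      (a + ∑ i, b i) ^ (n + q)
        = ((n + q).choose n * q.factorial : ℕ) • (a ^ n * ∏ i, b i) := by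
  intro q
  induction q with
  | zero => intro b a ha hb; simp
  | succ q ih =>
    intro b a ha hb
    set x : R := a + ∑ i : Fin q, b i.castSucc with hxdef
    have hx : x ^ (n + q)
        = ((n + q).choose n * q.factorial : ℕ) • (a ^ n * ∏ i : Fin q, b i.castSucc) :=
      ih _ a ha (fun i => hb _)
    have hprod : ∀ i : Fin q, (∏ j : Fin q, b j.castSucc) * b i.castSucc = 0 := by
      intro i
      rw [← Finset.mul_prod_erase Finset.univ _ (Finset.mem_univ i), mul_comm,
        ← mul_assoc, mul_comm (b i.castSucc), ← sq, hb, zero_mul]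
    have hx1 : x ^ (n + q + 1) = 0 := by
      rw [pow_succ, hx, smul_mul_assoc, hxdef, mul_add, Finset.mul_sum]
      have h1 : a ^ n * (∏ i : Fin q, b i.castSucc) * a = 0 := by
        rw [mul_comm, ← mul_assoc, ← pow_succ', ha, zero_mul]
      have h2 : ∀ i : Fin q, a ^ n * (∏ j : Fin q, b j.castSucc) * b i.castSucc = 0 := by
        intro i; rw [mul_assoc, hprod, mul_zero]
      simp [h1, h2]
    have hsum : (∑ i : Fin (q + 1), b i)
        = (∑ i : Fin q, b i.castSucc) + b (Fin.last q) := Fin.sum_univ_castSucc b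
    have hstep := step_lemma (n + q) x (b (Fin.last q)) hx1 (hb _)
    have : a + ∑ i : Fin (q + 1), b i = x + b (Fin.last q) := by
      rw [hsum, hxdef]; ring
    rw [show n + (q + 1) = (n + q) + 1 from rfl, this, hstep, hx, smul_mul_assoc,
      Fin.prod_univ_castSucc b, smul_smul, ← mul_assoc]
    congr 1
    · have h := Nat.add_one_mul_choose_eq (n + q) q
      have hsymm : (n + q).choose q = (n + q).choose n := by
        rw [Nat.choose_symm_add, Nat.add_comm n q, Nat.choose_symm_add]
      have hsymm2 : (n + q + 1).choose (q + 1) = (n + q + 1).choose n := by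
        rw [show n + q + 1 = (q + 1) + n by ring, Nat.choose_symm_add]
      rw [Nat.factorial_succ]
      calc (n + q + 1) * (n + q).choose n * q.factorial
          = ((n + q + 1) * (n + q).choose q) * q.factorial := by rw [hsymm]
        _ = ((n + q + 1).choose (q + 1) * (q + 1)) * q.factorial := by
              rw [← h]
        _ = (n + (q + 1)).choose n * ((q + 1) * q.factorial) := by
              rw [show n + (q + 1) = n + q + 1 from rfl, hsymm2]; ring
    · exact mul_assoc _ _ _

/-- Let `R` be a commutative ring, `n, q` naturals with `q ≥ 1`, and
`a, b₁, …, b_q ∈ R` with `a^(n+1) = 0` and `b_i² = 0` for every `i`.  Then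
`(a + b₁ + ⋯ + b_q)^(n+q) = C(n+q, n)·q! · aⁿ·b₁⋯b_q`. -/
theorem stmt_8 {R : Type*} [CommRing R] (n q : ℕ) (hq : 1 ≤ q)
    (a : R) (b : Fin q → R)
    (ha : a ^ (n + 1) = 0) (hb : ∀ i, b i ^ 2 = 0) :
    (a + ∑ i, b i) ^ (n + q)
      = ((n + q).choose n * q.factorial : ℕ) • (a ^ n * ∏ i, b i) :=
  key_lemma n q b a ha hb
end

section
/- Let V be a finite-dimensional real vector space, Ω an alternating bilinear form on V, and η_1, …, η_q linear functionals on V. Define the alternating bilinear form Ω̂ on ℝ^q × V by Ω̂((s,v),(t,w)) := Ω(v,w) + Σ_{i=1}^q (s_i·η_i(w) − t_i·η_i(v)). Then Ω̂ is nondegenerate if and only if η_1, …, η_q are linearly independent and the restriction of Ω to ∩_{i=1}^q ker η_i is nondegenerate. (This is the linear-algebraic core of the theorem that (M, ω, η_1,…,η_q) is a q-cosymplectic manifold if and only if (ℝ^q × M, pr*ω + Σ ds_i ∧ pr*η_i) is a symplectic manifold.) -/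
/-- Let `V` be a finite-dimensional real vector space, `Ω` an
alternating bilinear form on `V`, and `η₁, …, η_q` linear functionals.  Define `Ω̂` on
`ℝ^q × V` by `Ω̂((s,v),(t,w)) := Ω(v,w) + Σ_i (s_i·η_i(w) − t_i·η_i(v))`.  Then `Ω̂`
is nondegenerate iff `η₁, …, η_q` are linearly independent and the restriction of `Ω`
to `⋂_i ker η_i` is nondegenerate. -/
theorem stmt_9 {V : Type*} [AddCommGroup V] [Module ℝ V] [FiniteDimensional ℝ V]
    {q : ℕ}
    (Ω : V →ₗ[ℝ] V →ₗ[ℝ] ℝ) (hΩalt : ∀ v : V, Ω v v = 0)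
    (η : Fin q → (V →ₗ[ℝ] ℝ)) :
    (∀ p : (Fin q → ℝ) × V,
        (∀ p' : (Fin q → ℝ) × V,
          Ω p.2 p'.2 + ∑ i, (p.1 i * η i p'.2 - p'.1 i * η i p.2) = 0) → p = 0)
      ↔ (LinearIndependent ℝ η ∧
          ∀ v ∈ (⨅ i, LinearMap.ker (η i)),
            (∀ w ∈ (⨅ i, LinearMap.ker (η i)), Ω v w = 0) → v = 0) := by
  constructor
  · intro hnd
    constructor
    · rw [Fintype.linearIndependent_iff]
      intro c hc i
      have h0 : ((c, (0 : V)) : (Fin q → ℝ) × V) = 0 := by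
        apply hnd
        intro p'
        have := LinearMap.congr_fun hc p'.2
        simp only [LinearMap.coe_sum, Finset.sum_apply, LinearMap.smul_apply,
          smul_eq_mul, LinearMap.zero_apply] at this
        simp [map_zero, this]
      exact congrFun (congrArg Prod.fst h0) i
    · intro v hv hΩv
      -- Ω v vanishes on ⨅ ker η i, so Ω v ∈ span of η
      have hker : (⨅ i, LinearMap.ker (η i)) ≤ LinearMap.ker (Ω v) := by
        intro w hw
        exact hΩv w hw
      obtain ⟨c, hc⟩ := (Submodule.mem_span_range_iff_exists_fun ℝ).1
        (mem_span_of_iInf_ker_le_ker hker)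
      have hvK : ∀ i, η i v = 0 := by
        intro i
        exact (Submodule.mem_iInf _).1 hv i
      have h0 : ((-c, v) : (Fin q → ℝ) × V) = 0 := by
        apply hnd
        intro p'
        have := LinearMap.congr_fun hc p'.2
        simp only [LinearMap.coe_sum, Finset.sum_apply, LinearMap.smul_apply,
          smul_eq_mul] at this
        simp only [hvK, mul_zero, sub_zero, Pi.neg_apply, neg_mul]
        rw [← this]
        simp [Finset.sum_neg_distrib]
      exact congrArg Prod.snd h0
  · rintro ⟨hli, hres⟩ ⟨s, v⟩ hp
    simp only at hp
    -- first: η i v = 0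
    have hvK : ∀ i, η i v = 0 := by
      intro i
      have := hp (Pi.single i 1, 0)
      simpa [Pi.single_apply, Finset.sum_ite_eq', hΩalt] using this.symm
    -- then v ∈ K and Ω v w = 0 for w ∈ K
    have hv0 : v = 0 := by
      apply hres v ((Submodule.mem_iInf _).2 hvK)
      intro w hw
      have hwK : ∀ i, η i w = 0 := (Submodule.mem_iInf _).1 hw
      have := hp (0, w)
      simpa [hwK, hvK] using this
    -- finally s = 0
    have hs : ∀ w : V, ∑ i, s i * η i w = 0 := by
      intro w
      have := hp (0, w)
      simpa [hv0, hvK] using this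
    have hsum : ∑ i, s i • η i = 0 := by
      ext w
      simpa using hs w
    have := Fintype.linearIndependent_iff.1 hli s hsum
    ext <;> simp [hv0, this]
end
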